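/- arXiv:2004.00788 — 4 statements merged into one kernel-verified Lean document; each statement's English description precedes it below -/
import Mathlib

section
/- There is a containment of ideals I_{n,λ,s} ⊆ T(X_{n,λ,s}), i.e. every generator x_i^s and every generator e_d(S) with d > |S| − p^n_{|S|}(λ) lies in the ideal generated by the top-degree homogeneous components of polynomials vanishing on X_{n,λ,s}. -/
/-!
Every generator `g` of `I_{n,λ,s}` is homogeneous, say of degree `d`, and is the top component
of a polynomial `f = g + (lower-degree terms)` vanishing on `X_{n,λ,s}`.
For `g = x_i^s` take `f = ∏_j (x_i - α_j)`.

For `g = e_d(S)` with `m = |S|`, the value `e_j(S)(p)` is the coefficient of `t^j` in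
`E_p(t) = ∏_{i ∈ S} (1 + p_i t)`. At a point `p` of `X_{n,λ,s}` the value `α_j` occurs at
least `λ_j` times, hence at least `c_j = λ_j - (n - m)` times inside `S`, so `E_p = Q · R_p`
with `Q = ∏_j (1 + α_j t)^{c_j}` independent of `p` and
`deg R_p ≤ m - ∑ c_j ≤ m - p^n_m(λ) < d`; the middle inequality holds because `λ_j`
contributes `#{i ∈ (n - m, n] | i ≤ λ_j} ≤ c_j` to `p^n_m(λ)`. Hence
`f = ∑_{j ≤ d} [t^{d-j}] Q⁻¹ · e_j(S)` takes the value `[t^d] (E_p Q⁻¹) = [t^d] R_p = 0`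
at `p`, and its top component is `e_d(S)`.
-/

open MvPolynomial

/-- `j`-th entry (1-indexed) of the conjugate partition of the partition `L`. -/
def conjList (L : List ℕ) (j : ℕ) : ℕ := (L.filter fun x => j ≤ x).length

/-- `p^N_m(λ) = λ'_N + λ'_{N-1} + ⋯ + λ'_{N-m+1}`, the conjugate being padded by zeros. -/
def pcal (L : List ℕ) (N m : ℕ) : ℕ := ∑ i ∈ Finset.Icc (N - m + 1) N, conjList L i

/-- Elementary symmetric polynomial `e_d(S)` in the set of variables `S`. -/
noncomputable def esymF {n : ℕ} (S : Finset (Fin n)) (d : ℕ) : MvPolynomial (Fin n) ℚ :=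
  ∑ T ∈ S.powersetCard d, ∏ i ∈ T, X i

/-- The ideal `I_{n,λ,s}`, generated by the `x_i^s` and the partial elementary symmetric
polynomials `e_d(S)` for `d > |S| - p^n_{|S|}(λ)`. -/
noncomputable def IdealI (n s : ℕ) (L : List ℕ) : Ideal (MvPolynomial (Fin n) ℚ) :=
  Ideal.span ((Set.range fun i : Fin n => (X i : MvPolynomial (Fin n) ℚ) ^ s) ∪
    {p | ∃ (S : Finset (Fin n)) (d : ℕ), S.card - pcal L n S.card < d ∧ p = esymF S d})

/-- `L` is a partition of `k` with at most `s` parts. -/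
def IsPartitionOf (k s : ℕ) (L : List ℕ) : Prop :=
  L.Pairwise (· ≥ ·) ∧ (∀ x ∈ L, 0 < x) ∧ L.sum = k ∧ L.length ≤ s

/-- The monomial `x^α`. -/
noncomputable def monoOf {n : ℕ} (al : Fin n → ℕ) : MvPolynomial (Fin n) ℚ :=
  monomial (Finsupp.equivFunOnFinite.symm al) 1

/-- The point set `X_{n,λ,s}` attached to the distinct values `a 0, …, a (s-1)`:
every coordinate is some `a j`, and `a j` occurs at least `λ_{j+1}` times. -/
def Xset (n s : ℕ) (L : List ℕ) (a : Fin s → ℚ) : Set (Fin n → ℚ) :=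
  {p | (∀ i : Fin n, ∃ j : Fin s, p i = a j) ∧
    ∀ j : Fin s, L.getD (j : ℕ) 0 ≤ Nat.card {i : Fin n // p i = a j}}

/-- The vanishing ideal `I(Y)` of a set of points `Y ⊆ ℚⁿ`. -/
noncomputable def vanishingIdealOf (n : ℕ) (Y : Set (Fin n → ℚ)) :
    Ideal (MvPolynomial (Fin n) ℚ) where
  carrier := {f | ∀ p ∈ Y, eval p f = 0}
  zero_mem' := by intro p hp; simp
  add_mem' := by intro f g hf hg p hp; simp [hf p hp, hg p hp]
  smul_mem' := by intro c f hf p hp; simp [smul_eq_mul, hf p hp]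

/-- Top-degree homogeneous component `τ(f)`. -/
noncomputable def tauTop {n : ℕ} (f : MvPolynomial (Fin n) ℚ) : MvPolynomial (Fin n) ℚ :=
  homogeneousComponent f.totalDegree f

/-- The associated graded ideal `T(Y) = ⟨τ(f) : f ∈ I(Y), f ≠ 0⟩`. -/
noncomputable def gradedIdealOf (n : ℕ) (Y : Set (Fin n → ℚ)) :
    Ideal (MvPolynomial (Fin n) ℚ) :=
  Ideal.span {g | ∃ f ∈ vanishingIdealOf n Y, f ≠ 0 ∧ g = tauTop f}

open Finset

lemma mem_gradedIdealOf_of_sum_C_mul {n d : ℕ} {Y : Set (Fin n → ℚ)}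
    (P : ℕ → MvPolynomial (Fin n) ℚ) (c : ℕ → ℚ) (hP : ∀ j, (P j).IsHomogeneous j)
    (hc : c d = 1) (hY : ∀ p ∈ Y, eval p (∑ j ∈ range (d + 1), C (c j) * P j) = 0) :
    P d ∈ gradedIdealOf n Y := by
  set f := ∑ j ∈ range (d + 1), C (c j) * P j
  have hcomp : homogeneousComponent d f = P d := by
    simp only [f, map_sum, homogeneousComponent_C_mul,
      homogeneousComponent_of_mem ((mem_homogeneousSubmodule _ _).mpr (hP _))]
    simp [hc]
  have hdeg : f.totalDegree ≤ d :=
    totalDegree_finsetSum_le fun j hj =>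
      ((hP j).C_mul (c j)).totalDegree_le.trans (Nat.lt_succ_iff.mp (mem_range.mp hj))
  by_cases hPd : P d = 0
  · rw [hPd]
    exact zero_mem _
  have hf : f ≠ 0 := fun h => hPd (by rw [← hcomp, h, map_zero])
  have hdeg' : f.totalDegree = d :=
    hdeg.antisymm (not_lt.mp fun h => hPd (hcomp ▸ homogeneousComponent_eq_zero d f h))
  exact Ideal.subset_span ⟨f, hY, hf, by rw [tauTop, hdeg', hcomp]⟩

lemma X_pow_mem_gradedIdealOf {n s : ℕ} (L : List ℕ) (a : Fin s → ℚ) (i : Fin n) :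
    X i ^ s ∈ gradedIdealOf n (Xset n s L a) := by
  set q : Polynomial ℚ := ∏ j, (Polynomial.X - Polynomial.C (a j))
  have hq : q.natDegree = s := by simp [q, Polynomial.natDegree_finsetProd_X_sub_C_eq_card]
  refine mem_gradedIdealOf_of_sum_C_mul (X i ^ ·) q.coeff (fun j => isHomogeneous_X_pow i j)
    (hq ▸ (Polynomial.monic_prod_X_sub_C a univ).coeff_natDegree) ?_
  rintro p ⟨hp, -⟩
  obtain ⟨j, hj⟩ := hp i
  have hroot : q.eval (p i) = 0 := by
    simp only [q, Polynomial.eval_prod]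
    exact prod_eq_zero (mem_univ j) (by simp [hj])
  simpa [← smul_eq_C_mul, ← hq, Polynomial.aeval_eq_sum_range, Polynomial.eval_eq_sum_range]
    using hroot

lemma sum_getD_eq_sum_map {M : Type*} [AddCommMonoid M] (f : ℕ → M) (hf : f 0 = 0) :
    ∀ (L : List ℕ) (s : ℕ), L.length ≤ s → ∑ j : Fin s, f (L.getD j 0) = (L.map f).sum
  | [], s, _ => by simp [hf]
  | x :: L, s + 1, h => by
    rw [Fin.sum_univ_succ, List.map_cons, List.sum_cons,
      ← sum_getD_eq_sum_map f hf L s (by simpa using h)]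
    simp

lemma conjList_cons (x : ℕ) (L : List ℕ) (i : ℕ) :
    conjList (x :: L) i = (if i ≤ x then 1 else 0) + conjList L i := by
  by_cases h : i ≤ x <;> simp [conjList, h, add_comm]

lemma pcal_le_sum_map (L : List ℕ) (N m : ℕ) : pcal L N m ≤ (L.map (· - (N - m))).sum := by
  induction L with
  | nil => simp [pcal, conjList]
  | cons x L ih =>
    have hx : #{i ∈ Icc (N - m + 1) N | i ≤ x} ≤ x - (N - m) :=
      (card_le_card (t := Icc (N - m + 1) x) fun i hi => by
        simp only [mem_filter, mem_Icc] at hi ⊢; omega).trans (by rw [Nat.card_Icc]; omega)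
    simp only [pcal, conjList_cons, sum_add_distrib, sum_boole, Nat.cast_id] at ih ⊢
    simpa using add_le_add hx ih

lemma pcal_le_sum_getD {L : List ℕ} {s : ℕ} (hLs : L.length ≤ s) (N m : ℕ) :
    pcal L N m ≤ ∑ j : Fin s, (L.getD j 0 - (N - m)) :=
  sum_getD_eq_sum_map (· - (N - m)) (Nat.zero_sub _) L s hLs ▸ pcal_le_sum_map L N m

lemma esymF_isHomogeneous {n : ℕ} (S : Finset (Fin n)) (d : ℕ) :
    (esymF S d).IsHomogeneous d :=
  IsHomogeneous.sum _ _ _ fun T hT => by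
    simpa [(mem_powersetCard.mp hT).2] using
      IsHomogeneous.prod T (fun i => (X i : MvPolynomial (Fin n) ℚ)) (fun _ => 1)
        fun i _ => isHomogeneous_X ℚ i

lemma eval_esymF {n : ℕ} (S : Finset (Fin n)) (d : ℕ) (p : Fin n → ℚ) :
    eval p (esymF S d) = (∏ i ∈ S, (Polynomial.C (p i) * Polynomial.X + 1)).coeff d := by
  have hmonomial : ∀ T : Finset (Fin n),
      (∏ i ∈ T, Polynomial.C (p i) * Polynomial.X).coeff d =
        if #T = d then ∏ i ∈ T, p i else 0 := by
    intro T
    rw [prod_mul_distrib, prod_const, ← map_prod, Polynomial.coeff_C_mul_X_pow]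
    exact if_congr eq_comm rfl rfl
  simp_rw [prod_add, prod_const_one, mul_one, Polynomial.finsetSum_coeff, hmonomial,
    sum_ite, sum_const_zero, add_zero, esymF, map_sum, map_prod, eval_X,
    powersetCard_eq_filter]

lemma eval_sum_coeff_mul_esymF {n : ℕ} (φ : PowerSeries ℚ) (S : Finset (Fin n)) (d : ℕ)
    (p : Fin n → ℚ) :
    eval p (∑ j ∈ range (d + 1), C (PowerSeries.coeff (d - j) φ) * esymF S j) =
      PowerSeries.coeff d
        (((∏ i ∈ S, (Polynomial.C (p i) * Polynomial.X + 1) : Polynomial ℚ) : PowerSeries ℚ) *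
          φ) := by
  rw [map_sum, PowerSeries.coeff_mul, Finset.Nat.sum_antidiagonal_eq_sum_range_succ
    (fun i j => PowerSeries.coeff i _ * PowerSeries.coeff j φ)]
  refine sum_congr rfl fun j _ => ?_
  rw [eval_mul, eval_C, eval_esymF, Polynomial.coeff_coe, mul_comm]

lemma natDegree_prod_C_mul_X_add_one_le {ι R : Type*} [CommSemiring R] (T : Finset ι)
    (b : ι → R) : (∏ i ∈ T, (Polynomial.C (b i) * Polynomial.X + 1)).natDegree ≤ #T :=
  (Polynomial.natDegree_prod_le _ _).trans <|
    (sum_le_card_nsmul T _ 1 fun _ _ => Polynomial.natDegree_linear_le).trans_eq (mul_one _)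

lemma card_filter_le_card_filter_add {ι : Type*} [Fintype ι] (S : Finset ι) (P : ι → Prop)
    [DecidablePred P] : #{i | P i} ≤ #{i ∈ S | P i} + (Fintype.card ι - #S) := by
  classical
  calc #{i | P i} ≤ #({i ∈ S | P i} ∪ Sᶜ) :=
        card_le_card fun i hi => by by_cases hiS : i ∈ S <;> simp_all
    _ ≤ #{i ∈ S | P i} + (Fintype.card ι - #S) := (card_union_le _ _).trans_eq (by
        rw [card_compl])

lemma exists_subset_prod_eq_prod_pow {ι κ α M : Type*} [DecidableEq ι] [DecidableEq α]
    [Fintype κ] [CommMonoid M] (S : Finset ι) (p : ι → α) {a : κ → α}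
    (ha : Function.Injective a) (c : κ → ℕ) (hc : ∀ j, c j ≤ #{i ∈ S | p i = a j})
    (F : α → M) : ∃ U ⊆ S, #U = ∑ j, c j ∧ ∏ i ∈ U, F (p i) = ∏ j, F (a j) ^ c j := by
  choose T hTS hTc using fun j => exists_subset_card_eq (hc j)
  have hTp : ∀ j, ∀ i ∈ T j, p i = a j := fun j i hi => (mem_filter.mp (hTS j hi)).2
  have hdisj : (↑(univ : Finset κ) : Set κ).PairwiseDisjoint T := fun j _ k _ hjk =>
    disjoint_left.mpr fun i hij hik => hjk (ha ((hTp j i hij).symm.trans (hTp k i hik)))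
  refine ⟨univ.biUnion T, biUnion_subset.mpr fun j _ => (hTS j).trans (filter_subset _ _),
    by rw [card_biUnion hdisj]; simp [hTc], ?_⟩
  rw [prod_biUnion hdisj]
  refine prod_congr rfl fun j _ => ?_
  rw [prod_congr rfl fun i hi => congrArg F (hTp j i hi), prod_const, hTc]

lemma esymF_mem_gradedIdealOf {n s : ℕ} {L : List ℕ} (hLs : L.length ≤ s) {a : Fin s → ℚ}
    (ha : Function.Injective a) {S : Finset (Fin n)} {d : ℕ} (hd : #S - pcal L n #S < d) :
    esymF S d ∈ gradedIdealOf n (Xset n s L a) := by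
  set c : Fin s → ℕ := fun j => L.getD j 0 - (n - #S)
  set Q : Polynomial ℚ := ∏ j, (Polynomial.C (a j) * Polynomial.X + 1) ^ c j
  have hQ : PowerSeries.constantCoeff (Q : PowerSeries ℚ) = 1 := by
    rw [← PowerSeries.coeff_zero_eq_constantCoeff_apply, Polynomial.coeff_coe,
      Polynomial.coeff_zero_eq_eval_zero]
    simp [Q, Polynomial.eval_prod]
  refine mem_gradedIdealOf_of_sum_C_mul (esymF S)
    (fun j => PowerSeries.coeff (d - j) (Q : PowerSeries ℚ)⁻¹) (esymF_isHomogeneous S) ?_ ?_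
  · simp [PowerSeries.coeff_zero_eq_constantCoeff_apply, hQ]
  rintro p ⟨-, hp⟩
  have hc : ∀ j, c j ≤ #{i ∈ S | p i = a j} := fun j => by
    have hmult := (hp j).trans_eq (Nat.card_eq_fintype_card.trans (Fintype.card_subtype _))
    have hout := card_filter_le_card_filter_add S (p · = a j)
    rw [Fintype.card_fin] at hout
    show L.getD j 0 - (n - #S) ≤ _
    omega
  obtain ⟨U, hUS, hU, hUQ⟩ := exists_subset_prod_eq_prod_pow S p ha c hc
    (fun x => Polynomial.C x * Polynomial.X + 1)
  have hR : (∏ i ∈ S \ U, (Polynomial.C (p i) * Polynomial.X + 1)).natDegree < d := by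
    have hdeg := natDegree_prod_C_mul_X_add_one_le (S \ U) p
    have hpcal : pcal L n #S ≤ ∑ j, c j := pcal_le_sum_getD hLs n #S
    rw [card_sdiff_of_subset hUS] at hdeg
    omega
  rw [eval_sum_coeff_mul_esymF, ← prod_sdiff hUS, hUQ, Polynomial.coe_mul, mul_assoc,
    PowerSeries.mul_inv_cancel _ (by rw [hQ]; exact one_ne_zero), mul_one, Polynomial.coeff_coe]
  exact Polynomial.coeff_eq_zero_of_natDegree_lt hR

theorem stmt1_general (n k s : ℕ) (L : List ℕ) (hL : IsPartitionOf k s L)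
    (a : Fin s → ℚ) (ha : Function.Injective a) :
    IdealI n s L ≤ gradedIdealOf n (Xset n s L a) := by
  rw [IdealI, Ideal.span_le]
  rintro q (⟨i, rfl⟩ | ⟨S, d, hd, rfl⟩)
  · exact X_pow_mem_gradedIdealOf L a i
  · exact esymF_mem_gradedIdealOf hL.2.2.2 ha hd

/-- `I_{n,λ,s} ⊆ T(X_{n,λ,s})`. -/
theorem stmt1 (n k s : ℕ) (hk : 0 < k) (hs : 0 < s) (hkn : k ≤ n)
    (L : List ℕ) (hL : IsPartitionOf k s L)
    (a : Fin s → ℚ) (ha : Function.Injective a) :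
    IdealI n s L ≤ gradedIdealOf n (Xset n s L a) :=
  stmt1_general n k s L hL a ha
end

section
/- Let 1 ≤ a ≤ b be integers and n = a + b. For every shuffle γ of the sequences (0,1,…,a−1) and (0,1,…,b−1), there exists a shuffle δ of (0,1,…,a−1) and (0,1,…,b−1) such that δ_n = a−1 and γ_i ≤ δ_i for all 1 ≤ i ≤ n−1. -/
/-- `w` is a shuffle of the list of lists `Ls`: the positions of `w` are partitioned
into blocks, one per list of `Ls`, with each list occupying its block in order. -/
def IsShuffle {α : Type*} (Ls : List (List α)) (w : List α) : Prop :=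
  ∃ g : Fin w.length → Fin Ls.length,
    ∀ j : Fin Ls.length,
      ((List.finRange w.length).filter fun i => decide (g i = j)).map w.get = Ls.get j

/-!
Encode a shuffle of `(0,…,a-1)` and `(0,…,b-1)` by the set of positions `p` taken by the
first sequence: the entry at position `i` is the number of earlier positions in the same
block, i.e. `c i` or `i - c i`, where `c i` counts the `p`-positions below `i`. Every entry
of `γ` is therefore at most `i - L i`, where `L i = min (c i, i - c i, a - 1)`. The level `L`
starts at `0` and rises by `0` or `1` at each step; take for `δ` the shuffle whose first
block is the set of positions where `L` rises, together with the last position. Where `L`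
rises, `γ` and `δ` share the entry `L i`; elsewhere `δ` has entry `i - L i`. Since `a ≤ b`,
`L` reaches `a - 1` at position `n - 1`, so `δ` ends with `a - 1`.
-/

namespace ShuffleDomination

def countBelow (p : ℕ → Bool) (i : ℕ) : ℕ := (List.range i).countP p

section countBelow

variable (p : ℕ → Bool)

lemma countBelow_succ (i : ℕ) :
    countBelow p (i + 1) = countBelow p i + if p i then 1 else 0 := by
  simp only [countBelow, List.range_succ, List.countP_append, List.countP_singleton]

lemma countBelow_add_countBelow_not (i : ℕ) : countBelow p i + countBelow (!p ·) i = i := by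
  simpa [countBelow] using (List.length_eq_countP_add_countP p (l := List.range i)).symm

lemma countBelow_not_eq_sub (i : ℕ) : countBelow (!p ·) i = i - countBelow p i := by
  have := countBelow_add_countBelow_not p i
  omega

lemma countBelow_congr {p' : ℕ → Bool} {i : ℕ} (h : ∀ j < i, p j = p' j) :
    countBelow p i = countBelow p' i :=
  List.countP_congr fun j hj => by rw [h j (List.mem_range.mp hj)]

lemma countBelow_unit_steps {t : ℕ → ℕ} (h0 : t 0 = 0)
    (hstep : ∀ i, t (i + 1) = t i ∨ t (i + 1) = t i + 1) (k : ℕ) :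
    countBelow (fun i => decide (t (i + 1) = t i + 1)) k = t k := by
  induction k with
  | zero => exact h0.symm
  | succ k ih => rcases hstep k with h | h <;> simp [countBelow_succ, ih, h]

lemma map_countBelow_filter_range (m : ℕ) :
    ((List.range m).filter p).map (countBelow p) = List.range (countBelow p m) := by
  induction m with
  | zero => rfl
  | succ m ih =>
    cases hm : p m <;>
      simp [List.range_succ, List.filter_append, ih, hm, countBelow_succ]

lemma eq_countBelow_of_map_filter_range {f : ℕ → ℕ} {m k : ℕ}
    (hf : ((List.range m).filter p).map f = List.range k) {i : ℕ} (hi : i < m) (hp : p i) :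
    f i = countBelow p i := by
  have hk : k = countBelow p m := by
    simpa [countBelow, List.countP_eq_length_filter] using (congrArg List.length hf).symm
  rw [hk, ← map_countBelow_filter_range] at hf
  exact List.map_inj_left.mp hf i (List.mem_filter.mpr ⟨List.mem_range.mpr hi, hp⟩)

end countBelow

lemma map_filter_finRange {n : ℕ} (P : Fin n → Bool) (F : Fin n → ℕ) {P' : ℕ → Bool}
    {F' : ℕ → ℕ} (hP : ∀ i : Fin n, P' i = P i) (hF : ∀ i : Fin n, F' i = F i) :
    ((List.finRange n).filter P).map F = ((List.range n).filter P').map F' := by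
  rw [← List.map_coe_finRange_eq_range, List.filter_map, List.map_map]
  exact congrArg₂ List.map (funext fun i => (hF i).symm)
    (List.filter_congr fun i _ => (hP i).symm)

/-- The entry at position `i` of the shuffle whose `p`-positions carry the first sequence. -/
def shuffleEntry (p : ℕ → Bool) (i : ℕ) : ℕ :=
  if p i then countBelow p i else countBelow (!p ·) i

def shuffleWord (p : ℕ → Bool) (m : ℕ) : List ℕ := (List.range m).map (shuffleEntry p)

@[simp]
lemma length_shuffleWord (p : ℕ → Bool) (m : ℕ) : (shuffleWord p m).length = m := by
  simp [shuffleWord]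

lemma getD_shuffleWord (p : ℕ → Bool) {m i : ℕ} (hi : i < m) :
    (shuffleWord p m).getD i 0 = shuffleEntry p i := by
  simp [shuffleWord, hi]

lemma shuffleEntry_of_pos {p : ℕ → Bool} {i : ℕ} (hp : p i = true) :
    shuffleEntry p i = countBelow p i := by
  rw [shuffleEntry, if_pos hp]

lemma shuffleEntry_of_not {p : ℕ → Bool} {i : ℕ} (hp : p i = false) :
    shuffleEntry p i = i - countBelow p i := by
  rw [shuffleEntry, if_neg (by simp [hp]), countBelow_not_eq_sub]

lemma isShuffle_shuffleWord (p : ℕ → Bool) {m a b : ℕ} (ha : countBelow p m = a)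
    (hb : countBelow (!p ·) m = b) :
    IsShuffle [List.range a, List.range b] (shuffleWord p m) := by
  refine ⟨fun i => if p i then 0 else 1, fun j => ?_⟩
  have hblock (q : ℕ → Bool) (hq : ∀ i, q i → shuffleEntry p i = countBelow q i) :
      ((List.range m).filter q).map (shuffleEntry p) = List.range (countBelow q m) := by
    rw [← map_countBelow_filter_range]
    exact List.map_congr_left fun i hi => hq i (List.mem_filter.mp hi).2
  fin_cases j
  · rw [map_filter_finRange _ _ (P' := p) (F' := shuffleEntry p) (by simp) (by simp [shuffleWord]),
      length_shuffleWord, hblock p fun _ => shuffleEntry_of_pos, ha]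
    rfl
  · rw [map_filter_finRange _ _ (P' := (!p ·)) (F' := shuffleEntry p) (by simp)
      (by simp [shuffleWord]), length_shuffleWord,
      hblock (!p ·) (fun i hi => by simp_all [shuffleEntry]), hb]
    rfl

lemma exists_eq_shuffleWord {a b : ℕ} {w : List ℕ}
    (hw : IsShuffle [List.range a, List.range b] w) :
    ∃ p : ℕ → Bool, countBelow p (a + b) = a ∧ w = shuffleWord p (a + b) := by
  obtain ⟨g, hg⟩ := hw
  set p : ℕ → Bool := fun i => if h : i < w.length then g ⟨i, h⟩ = 0 else false
  have hblock (j : Fin 2) (q : ℕ → Bool) (hq : ∀ i : Fin w.length, q i = decide (g i = j)) :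
      ((List.range w.length).filter q).map (w.getD · 0) = [List.range a, List.range b].get j :=
    (map_filter_finRange _ _ (fun i => hq i) (by simp)).symm.trans (hg j)
  have h0 := hblock 0 p (by simp [p])
  have h1 := hblock 1 (!p ·) (fun i => by simp [p]; generalize g i = u; fin_cases u <;> rfl)
  have hlen (q : ℕ → Bool) (k : ℕ)
      (hq : ((List.range w.length).filter q).map (w.getD · 0) = List.range k) :
      countBelow q w.length = k := by
    simpa [countBelow, List.countP_eq_length_filter] using congrArg List.length hq
  have ha : countBelow p w.length = a := hlen p a h0
  have hab : w.length = a + b := by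
    rw [← countBelow_add_countBelow_not p w.length, ha, hlen _ b h1]
  refine ⟨p, hab ▸ ha, List.ext_getElem (by simp [hab]) fun i hi _ => ?_⟩
  rw [← List.getD_eq_getElem w 0 hi]
  simp only [shuffleWord, List.getElem_map, List.getElem_range, shuffleEntry]
  cases hp : p i
  · simpa using eq_countBelow_of_map_filter_range (!p ·) h1 hi (by simpa using hp)
  · simpa using eq_countBelow_of_map_filter_range p h0 hi hp

section Domination

variable (p : ℕ → Bool) (a m : ℕ)

def capLevel (i : ℕ) : ℕ := min (min (countBelow p i) (countBelow (!p ·) i)) (a - 1)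

def dominatingPattern (i : ℕ) : Bool :=
  decide (i + 1 = m ∨ capLevel p a (i + 1) = capLevel p a i + 1)

lemma capLevel_succ (i : ℕ) :
    capLevel p a (i + 1) = capLevel p a i ∨ capLevel p a (i + 1) = capLevel p a i + 1 := by
  simp only [capLevel, countBelow_succ]
  cases p i <;> simp <;> omega

lemma countBelow_dominatingPattern {i : ℕ} (hi : i < m) :
    countBelow (dominatingPattern p a m) i = capLevel p a i := by
  rw [← countBelow_unit_steps rfl (capLevel_succ p a) i]
  exact countBelow_congr _ fun j hj => by simp [dominatingPattern, show j + 1 ≠ m by omega]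

variable {p a m}

lemma capLevel_pred_eq (ha : countBelow p m = a) (hab : a ≤ countBelow (!p ·) m) :
    capLevel p a (m - 1) = a - 1 := by
  rcases m with _ | m
  · simp [capLevel, ← ha, countBelow]
  · rw [countBelow_succ] at ha
    rw [countBelow_succ] at hab
    simp only [capLevel, Nat.add_sub_cancel]
    cases hpm : p m <;> simp [hpm] at ha hab <;> omega

lemma countBelow_dominatingPattern_eq (ha : countBelow p m = a) (hab : a ≤ countBelow (!p ·) m)
    (ha₀ : 1 ≤ a) : countBelow (dominatingPattern p a m) m = a := by
  obtain ⟨k, rfl⟩ : ∃ k, m = k + 1 := Nat.exists_eq_add_one.mpr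
    (by have := countBelow_add_countBelow_not p m; omega)
  have hk := capLevel_pred_eq ha hab
  rw [Nat.add_sub_cancel] at hk
  rw [countBelow_succ, countBelow_dominatingPattern p a _ k.lt_succ_self, hk]
  simp [dominatingPattern]
  omega

lemma shuffleEntry_dominatingPattern_pred (ha : countBelow p m = a)
    (hab : a ≤ countBelow (!p ·) m) (hm : 1 ≤ m) :
    shuffleEntry (dominatingPattern p a m) (m - 1) = a - 1 := by
  rw [shuffleEntry_of_pos (by simp [dominatingPattern]; omega),
    countBelow_dominatingPattern p a m (by omega), capLevel_pred_eq ha hab]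

lemma shuffleEntry_le_shuffleEntry_dominatingPattern {i : ℕ} (hi : i + 1 < m) :
    shuffleEntry p i ≤ shuffleEntry (dominatingPattern p a m) i := by
  have hsplit := countBelow_add_countBelow_not p i
  cases hq : dominatingPattern p a m i
  · rw [shuffleEntry_of_not hq, countBelow_dominatingPattern p a m (by omega)]
    simp only [shuffleEntry, capLevel]
    split <;> omega
  · have hstep : capLevel p a (i + 1) = capLevel p a i + 1 := by
      simpa [dominatingPattern, show i + 1 ≠ m by omega] using hq
    rw [shuffleEntry_of_pos hq, countBelow_dominatingPattern p a m (by omega)]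
    simp only [capLevel, countBelow_succ] at hstep ⊢
    cases hp : p i <;> simp [shuffleEntry, hp] at hstep ⊢ <;> omega

end Domination

end ShuffleDomination

open ShuffleDomination in
/-- If `γ` is a shuffle of `(0,…,a-1)` and `(0,…,b-1)` with
`1 ≤ a ≤ b` and `n = a + b`, then there is such a shuffle `δ` with last entry `a-1`
dominating `γ` in the first `n-1` entries. -/
theorem stmt6 (a b n : ℕ) (ha : 1 ≤ a) (hab : a ≤ b) (hn : n = a + b)
    (γ : List ℕ) (hγ : IsShuffle [List.range a, List.range b] γ) :
    ∃ δ : List ℕ, IsShuffle [List.range a, List.range b] δ ∧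
      δ.getD (n - 1) 0 = a - 1 ∧ ∀ i : ℕ, i < n - 1 → γ.getD i 0 ≤ δ.getD i 0 := by
  subst hn
  obtain ⟨p, hp, rfl⟩ := exists_eq_shuffleWord hγ
  have hab' : a ≤ countBelow (!p ·) (a + b) := by
    rw [countBelow_not_eq_sub, hp]
    omega
  set q := dominatingPattern p a (a + b)
  have hq : countBelow q (a + b) = a := countBelow_dominatingPattern_eq hp hab' ha
  refine ⟨shuffleWord q (a + b), isShuffle_shuffleWord q hq ?_, ?_, fun i hi => ?_⟩
  · rw [countBelow_not_eq_sub, hq]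
    omega
  · rw [getD_shuffleWord q (by omega)]
    exact shuffleEntry_dominatingPattern_pred hp hab' (by omega)
  · rw [getD_shuffleWord p (by omega), getD_shuffleWord q (by omega)]
    exact shuffleEntry_le_shuffleEntry_dominatingPattern (by omega)
end

section
/- Let h ≤ k ≤ n and s be positive integers, let λ be a partition of h with at most s parts, and let μ be a partition of k with at most s parts. If either (h = k and λ is dominated by μ) or (h < k and λ is contained in μ), then C_{n,μ,s} ⊆ C_{n,λ,s}. -/
open MvPolynomial

/-- The lists `β^1(λ), …, β^{λ₁}(λ)` together with the list of `n-k` copies of `s-1`;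
an `(n,λ,s)`-staircase is a shuffle of these. -/
def staircaseLists (n k s : ℕ) (L : List ℕ) : List (List ℕ) :=
  ((List.range (L.getD 0 0)).map fun j => List.range (conjList L (j + 1))) ++
    [List.replicate (n - k) (s - 1)]

/-- The set `C_{n,λ,s}` of weak compositions contained componentwise in some
`(n,λ,s)`-staircase. -/
def Cset (n k s : ℕ) (L : List ℕ) : Set (Fin n → ℕ) :=
  {al | ∃ w : List ℕ, IsShuffle (staircaseLists n k s L) w ∧ w.length = n ∧
    ∀ i : Fin n, al i ≤ w.getD (i : ℕ) 0}

/-- The set of monomials `A_{n,λ,s}`. -/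
def Aset (n k s : ℕ) (L : List ℕ) : Set (MvPolynomial (Fin n) ℚ) :=
  monoOf '' Cset n k s L

/-!
A staircase is a labelling of the positions `0, …, n-1` by the sequences `β^j(ν)` and the free
sequence, the entry at a position being its rank inside its sequence (or `s - 1` if it is free).
So `C_{n,ν,s}` only depends on the column lengths `ν'` and on the number `n - |ν|` of free
positions, and it suffices to change these numbers by moves that never lower a staircase:

* move the last box of column `j` to a column `i` with `ν'_j ≤ ν'_i + 1`: pool the two chains and
  give chain `j` the later of the two positions of each rank `t < ν'_j - 1`, chain `i` the rest;
* make the last box of column `j` free, which is harmless as `ν'_j ≤ s`.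

If `λ ⊆ μ` then `λ' ≤ μ'` columnwise and the second move does it. If `λ ≤ μ` in dominance order
with `|λ| = |μ|`, then `μ' ≤ λ'` in dominance order (`∑_{u<t} ν'_{u+1} = ∑_i min ν_i t`), and
`λ'` is reached from `μ'` by moves of the first kind that keep the columns sorted.
-/

theorem List.map_filter_eq_iff {α β : Type*} (P : α → Bool) (F : α → β) (xs : List α)
    (l : List β) :
    (xs.filter P).map F = l ↔ xs.countP P = l.length ∧
      ∀ i (hi : i < xs.length), P xs[i] → l[(xs.take i).countP P]? = some (F xs[i]) := by
  induction xs generalizing l with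
  | nil =>
    simp only [List.filter_nil, List.map_nil, List.countP_nil, List.length_nil]
    exact ⟨fun h => ⟨by rw [← h]; rfl, fun i hi => absurd hi (Nat.not_lt_zero i)⟩,
      fun h => (List.length_eq_zero_iff.mp h.1.symm).symm⟩
  | cons x xs ih =>
    cases hx : P x
    · rw [List.filter_cons_of_neg (by simp [hx]), ih, List.countP_cons_of_neg (by simp [hx])]
      constructor
      · rintro ⟨hlen, hval⟩
        refine ⟨hlen, fun i hi hPi => ?_⟩
        cases i with
        | zero => simp [hx] at hPi
        | succ i => simpa [hx] using hval i (by simpa using hi) hPi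
      · rintro ⟨hlen, hval⟩
        refine ⟨hlen, fun i hi hPi => ?_⟩
        have := hval (i + 1) (by simpa using hi) hPi
        simpa [hx] using this
    · cases l with
      | nil => simp [hx]
      | cons y l =>
        rw [List.filter_cons_of_pos hx, List.map_cons, List.cons.injEq, ih,
          List.countP_cons_of_pos hx, List.length_cons, Nat.add_right_cancel_iff]
        constructor
        · rintro ⟨rfl, hlen, hval⟩
          refine ⟨hlen, fun i hi hPi => ?_⟩
          cases i with
          | zero => simp
          | succ i => simpa [hx] using hval i (by simpa using hi) hPi
        · rintro ⟨hlen, hval⟩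
          have h0 := hval 0 (by simp) hx
          refine ⟨by simpa using h0.symm, hlen, fun i hi hPi => ?_⟩
          have := hval (i + 1) (by simpa using hi) hPi
          simpa [hx] using this

namespace Staircase

/-! ### Shuffles as labellings of positions -/

section Labelling

variable {ι : Type*} [DecidableEq ι]

def labelCount (g : ℕ → ι) (x : ι) (p : ℕ) : ℕ := (List.range p).countP fun q => g q = x

variable {g : ℕ → ι} {x : ι}

@[simp] lemma labelCount_zero : labelCount g x 0 = 0 := rfl

lemma labelCount_succ (p : ℕ) :
    labelCount g x (p + 1) = labelCount g x p + if g p = x then 1 else 0 := by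
  simp [labelCount, List.range_succ, List.countP_append]

lemma labelCount_succ_of_eq {y : ι} {p : ℕ} (h : g p = x) :
    labelCount g y (p + 1) = labelCount g y p + if x = y then 1 else 0 := by
  rw [labelCount_succ, h]

lemma labelCount_mono : Monotone (labelCount g x) :=
  monotone_nat_of_le_succ fun p => by rw [labelCount_succ]; omega

lemma labelCount_lt {p N : ℕ} (hp : p < N) (hx : g p = x) :
    labelCount g x p < labelCount g x N :=
  calc labelCount g x p < labelCount g x (p + 1) := by rw [labelCount_succ, if_pos hx]; omega
    _ ≤ labelCount g x N := labelCount_mono hp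

lemma labelCount_congr {κ : Type*} [DecidableEq κ] {g' : ℕ → κ} {x' : κ} {p : ℕ}
    (h : ∀ q < p, g q = x ↔ g' q = x') : labelCount g x p = labelCount g' x' p := by
  unfold labelCount
  exact List.countP_congr fun q hq => by simpa using h q (List.mem_range.mp hq)

lemma map_filter_range_eq_iff {β : Type*} (N : ℕ) (F : ℕ → β) (l : List β) :
    ((List.range N).filter fun p => g p = x).map F = l ↔
      labelCount g x N = l.length ∧ ∀ p < N, g p = x → l[labelCount g x p]? = some (F p) := by
  rw [List.map_filter_eq_iff]
  refine and_congr Iff.rfl ⟨fun h p hp hgp => ?_, fun h i hi hgi => ?_⟩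
  · have := h p (by simpa using hp) (by simpa using hgp)
    simpa [labelCount, List.take_range, Nat.min_eq_left hp.le] using this
  · have hi' : i < N := by simpa using hi
    have := h i hi' (by simpa using hgi)
    simpa [labelCount, List.take_range, Nat.min_eq_left hi'.le] using this

end Labelling

lemma map_get_filter_finRange {α : Type*} (a : α) (w : List α) (P : ℕ → Prop)
    [DecidablePred P] :
    ((List.finRange w.length).filter fun i : Fin w.length => P i).map w.get =
      ((List.range w.length).filter P).map (w.getD · a) := by
  rw [← List.map_coe_finRange_eq_range, List.filter_map, List.map_map]
  exact List.map_congr_left fun i _ => (List.getD_eq_getElem _ _ i.2).symm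

theorem isShuffle_iff_exists_labelling {α : Type*} (a : α) (Ls : List (List α)) (w : List α) :
    IsShuffle Ls w ↔ ∃ G : ℕ → ℕ, (∀ p < w.length, G p < Ls.length) ∧
      ∀ J < Ls.length, ((List.range w.length).filter fun p => G p = J).map (w.getD · a) =
        Ls.getD J [] := by
  constructor
  · rintro ⟨G, hG⟩
    refine ⟨fun p => if h : p < w.length then G ⟨p, h⟩ else 0, fun p hp => by simp [hp],
      fun J hJ => ?_⟩
    rw [← map_get_filter_finRange, List.getD_eq_getElem _ _ hJ,
      show Ls[J] = Ls.get ⟨J, hJ⟩ from rfl, ← hG ⟨J, hJ⟩]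
    congr 2
    ext i
    simp [Fin.ext_iff]
  · rintro ⟨G, hb, hG⟩
    refine ⟨fun i => ⟨G i, hb i i.2⟩, fun J => ?_⟩
    rw [List.get_eq_getElem, ← List.getD_eq_getElem _ [], ← hG J J.2, ← map_get_filter_finRange]
    congr 2
    ext i
    simp [Fin.ext_iff]

/-- A staircase labelling: `some j` marks a position of the chain `β^{j+1}`, `none` a free one. -/
def stairValue (v : ℕ) (g : ℕ → Option ℕ) (p : ℕ) : ℕ :=
  if g p = none then v else labelCount g (g p) p

structure HasShape (N : ℕ) (g : ℕ → Option ℕ) (c : ℕ → ℕ) (f : ℕ) : Prop where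
  count_some : ∀ j, labelCount g (some j) N = c j
  count_none : labelCount g none N = f

def chainOf (c : ℕ → ℕ) (f v : ℕ) : Option ℕ → List ℕ
  | some j => List.range (c j)
  | none => List.replicate f v

def chainLists (m : ℕ) (c : ℕ → ℕ) (f v : ℕ) : List (List ℕ) :=
  ((List.range m).map fun j => List.range (c j)) ++ [List.replicate f v]

def labelOfIndex (m J : ℕ) : Option ℕ := if J = m then none else some J

lemma labelOfIndex_injective (m : ℕ) : (labelOfIndex m).Injective := by
  intro J J' h
  unfold labelOfIndex at h
  split_ifs at h <;> simp_all

lemma length_chainLists (m : ℕ) (c : ℕ → ℕ) (f v : ℕ) : (chainLists m c f v).length = m + 1 := by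
  simp [chainLists]

lemma getD_chainLists {m J : ℕ} (c : ℕ → ℕ) (f v : ℕ) (hJ : J ≤ m) :
    (chainLists m c f v).getD J [] = chainOf c f v (labelOfIndex m J) := by
  rcases hJ.lt_or_eq with hJ | rfl
  · simp [chainLists, List.getD_eq_getElem?_getD, List.getElem?_append_left, hJ, labelOfIndex,
      hJ.ne, chainOf]
  · simp [chainLists, List.getD_eq_getElem?_getD, labelOfIndex, chainOf]

lemma map_filter_eq_chainOf_iff {c : ℕ → ℕ} {f v : ℕ} {w : List ℕ} (g : ℕ → Option ℕ)
    (x : Option ℕ) :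
    ((List.range w.length).filter fun p => g p = x).map (w.getD · 0) = chainOf c f v x ↔
      labelCount g x w.length = (chainOf c f v x).length ∧
        ∀ p < w.length, g p = x → w.getD p 0 = stairValue v g p := by
  rw [map_filter_range_eq_iff]
  refine and_congr_right fun hcount => forall₂_congr fun p hp => imp_congr_right fun hgp => ?_
  have hlt := hcount ▸ labelCount_lt hp hgp
  cases x <;> simp_all [chainOf, stairValue, eq_comm]

lemma filter_labelOfIndex {m N : ℕ} {G : ℕ → ℕ} {g : ℕ → Option ℕ}
    (hgG : ∀ p < N, g p = labelOfIndex m (G p)) (J : ℕ) :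
    ((List.range N).filter fun p => G p = J) =
      (List.range N).filter fun p => g p = labelOfIndex m J := by
  refine List.filter_congr fun p hp => ?_
  simp only [hgG p (List.mem_range.mp hp), (labelOfIndex_injective m).eq_iff]

lemma exists_hasShape_of_isShuffle {m : ℕ} {c : ℕ → ℕ} (hc : ∀ j, m ≤ j → c j = 0) {f v : ℕ}
    {w : List ℕ} (hw : IsShuffle (chainLists m c f v) w) :
    ∃ g, HasShape w.length g c f ∧ ∀ p < w.length, w.getD p 0 = stairValue v g p := by
  obtain ⟨G, hb, hG⟩ := (isShuffle_iff_exists_labelling 0 _ w).mp hw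
  simp only [length_chainLists, Nat.lt_succ_iff] at hb hG
  have hchain (J : ℕ) (hJ : J ≤ m) :=
    (map_filter_eq_chainOf_iff (labelOfIndex m ∘ G) (labelOfIndex m J)).mp
      (getD_chainLists c f v hJ ▸ filter_labelOfIndex (fun _ _ => rfl) J ▸ hG J hJ)
  refine ⟨labelOfIndex m ∘ G, ⟨fun j => ?_, ?_⟩, fun p hp => (hchain (G p) (hb p hp)).2 p hp rfl⟩
  · rcases lt_or_ge j m with hj | hj
    · simpa [labelOfIndex, hj.ne, chainOf] using (hchain j hj.le).1
    · rw [hc j hj, labelCount, List.countP_eq_zero]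
      intro q hq
      have := hb q (List.mem_range.mp hq)
      simp only [Function.comp_apply, labelOfIndex]
      split_ifs <;> simp
      omega
  · simpa [labelOfIndex, chainOf] using (hchain m le_rfl).1

lemma isShuffle_of_hasShape {m : ℕ} {c : ℕ → ℕ} (hc : ∀ j, m ≤ j → c j = 0) {f v : ℕ}
    {w : List ℕ} {g : ℕ → Option ℕ} (hg : HasShape w.length g c f)
    (hval : ∀ p < w.length, w.getD p 0 = stairValue v g p) :
    IsShuffle (chainLists m c f v) w := by
  have hgm : ∀ p < w.length, ∀ j, g p = some j → j < m := by
    intro p hp j hj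
    by_contra hjm
    have := labelCount_lt hp hj
    rw [hg.count_some, hc j (not_lt.mp hjm)] at this
    omega
  have hgG : ∀ p < w.length, g p = labelOfIndex m ((g p).getD m) := by
    intro p hp
    cases hgp : g p with
    | none => simp [labelOfIndex]
    | some j => simp [labelOfIndex, (hgm p hp j hgp).ne]
  refine (isShuffle_iff_exists_labelling 0 _ w).mpr ⟨fun p => (g p).getD m, fun p hp => ?_,
    fun J hJ => ?_⟩
  · rw [length_chainLists, Nat.lt_succ_iff]
    show (g p).getD m ≤ m
    cases hgp : g p with
    | none => simp
    | some j => simpa using (hgm p hp j hgp).le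
  · rw [length_chainLists, Nat.lt_succ_iff] at hJ
    rw [getD_chainLists c f v hJ, filter_labelOfIndex hgG, map_filter_eq_chainOf_iff]
    refine ⟨?_, fun p hp _ => hval p hp⟩
    rcases hJ.lt_or_eq with hJ | rfl
    · simpa [labelOfIndex, hJ.ne, chainOf] using hg.count_some J
    · simpa [labelOfIndex, chainOf] using hg.count_none

/-! ### Moves between staircase shapes -/

def ShapeCovers (N v : ℕ) (c : ℕ → ℕ) (f : ℕ) (c' : ℕ → ℕ) (f' : ℕ) : Prop :=
  ∀ g, HasShape N g c f → ∃ g', HasShape N g' c' f' ∧ ∀ p < N, stairValue v g p ≤ stairValue v g' p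

namespace ShapeCovers

variable {N v : ℕ} {c c' c'' : ℕ → ℕ} {f f' f'' : ℕ}

lemma refl (c : ℕ → ℕ) (f : ℕ) : ShapeCovers N v c f c f :=
  fun g hg => ⟨g, hg, fun _ _ => le_rfl⟩

lemma trans (h : ShapeCovers N v c f c' f') (h' : ShapeCovers N v c' f' c'' f'') :
    ShapeCovers N v c f c'' f'' := by
  intro g hg
  obtain ⟨g', hg', hle⟩ := h g hg
  obtain ⟨g'', hg'', hle'⟩ := h' g' hg'
  exact ⟨g'', hg'', fun p hp => (hle p hp).trans (hle' p hp)⟩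

end ShapeCovers

section Resplit

variable (g : ℕ → Option ℕ) (i j r : ℕ)

def pairCount (p : ℕ) : ℕ := min (min (labelCount g (some i) p) (labelCount g (some j) p)) r

/-- Pool chains `i` and `j` and split them again: for each rank `t < r`, the later of the two
positions of rank `t` goes to chain `j`, all other positions to chain `i`. -/
def resplit (p : ℕ) : Option ℕ :=
  if g p = some i ∨ g p = some j then
    if pairCount g i j r p < pairCount g i j r (p + 1) then some j else some i
  else g p

variable {g i j r}

lemma resplit_of_not_mem {p : ℕ} (h : ¬(g p = some i ∨ g p = some j)) : resplit g i j r p = g p :=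
  if_neg h

lemma resplit_eq_some_j_iff (hij : i ≠ j) (p : ℕ) : resplit g i j r p = some j ↔
    (g p = some i ∨ g p = some j) ∧ pairCount g i j r p < pairCount g i j r (p + 1) := by
  unfold resplit
  by_cases h1 : g p = some i ∨ g p = some j
  · by_cases h2 : pairCount g i j r p < pairCount g i j r (p + 1) <;> simp [h1, h2, hij]
  · rw [if_neg h1]; exact iff_of_false (not_or.mp h1).2 fun h => h1 h.1

lemma resplit_eq_some_i_iff (hij : i ≠ j) (p : ℕ) : resplit g i j r p = some i ↔
    (g p = some i ∨ g p = some j) ∧ ¬pairCount g i j r p < pairCount g i j r (p + 1) := by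
  unfold resplit
  by_cases h1 : g p = some i ∨ g p = some j
  · by_cases h2 : pairCount g i j r p < pairCount g i j r (p + 1) <;> simp [h1, h2, hij.symm]
  · rw [if_neg h1]; exact iff_of_false (not_or.mp h1).1 fun h => h1 h.1

lemma labelCount_resplit_j (hij : i ≠ j) (p : ℕ) :
    labelCount (resplit g i j r) (some j) p = pairCount g i j r p := by
  induction p with
  | zero => simp [pairCount]
  | succ p ih =>
    simp only [labelCount_succ, ih, resplit_eq_some_j_iff hij]
    unfold pairCount
    by_cases hi : g p = some i
    · simp only [hi, true_or, true_and, labelCount_succ_of_eq hi, if_true, Option.some.injEq, hij,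
        if_false]
      split_ifs <;> omega
    by_cases hj : g p = some j
    · simp only [hj, or_true, true_and, labelCount_succ_of_eq hj, if_true, Option.some.injEq,
        hij.symm, if_false]
      split_ifs <;> omega
    · simp only [hi, hj, or_self, false_and, if_false, labelCount_succ, add_zero]

lemma labelCount_resplit_i (hij : i ≠ j) (p : ℕ) :
    labelCount (resplit g i j r) (some i) p =
      labelCount g (some i) p + labelCount g (some j) p - pairCount g i j r p := by
  induction p with
  | zero => simp
  | succ p ih =>
    simp only [labelCount_succ, ih, resplit_eq_some_i_iff hij]
    unfold pairCount
    by_cases hi : g p = some i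
    · simp only [hi, true_or, true_and, labelCount_succ_of_eq hi, if_true, Option.some.injEq, hij,
        if_false]
      split_ifs <;> omega
    by_cases hj : g p = some j
    · simp only [hj, or_true, true_and, labelCount_succ_of_eq hj, if_true, Option.some.injEq,
        hij.symm, if_false]
      split_ifs <;> omega
    · simp only [hi, hj, or_self, false_and, if_false, labelCount_succ, add_zero]

lemma labelCount_resplit_of_ne {x : Option ℕ} (hi : some i ≠ x) (hj : some j ≠ x) (p : ℕ) :
    labelCount (resplit g i j r) x p = labelCount g x p := by
  refine labelCount_congr fun q _ => ?_
  by_cases h : g q = some i ∨ g q = some j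
  · have h' : resplit g i j r q = some i ∨ resplit g i j r q = some j := by
      unfold resplit; rw [if_pos h]; split_ifs <;> simp
    refine iff_of_false ?_ ?_
    · rcases h' with h' | h' <;> rw [h'] <;> assumption
    · rcases h with h | h <;> rw [h] <;> assumption
  · rw [resplit_of_not_mem h]

lemma stairValue_le_resplit (hij : i ≠ j) (v p : ℕ) :
    stairValue v g p ≤ stairValue v (resplit g i j r) p := by
  by_cases h : g p = some i ∨ g p = some j
  · have hpair := labelCount_resplit_j (g := g) (r := r) hij p
    have hrest := labelCount_resplit_i (g := g) (r := r) hij p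
    by_cases hlt : pairCount g i j r p < pairCount g i j r (p + 1)
    · have h' := (resplit_eq_some_j_iff hij p).mpr ⟨h, hlt⟩
      unfold pairCount at hlt hpair
      rcases h with h | h <;>
      · simp only [stairValue, h, h', reduceCtorEq, if_false, labelCount_succ_of_eq h,
          Option.some.injEq, hij, hij.symm, if_true] at hlt hpair ⊢
        omega
    · have h' := (resplit_eq_some_i_iff hij p).mpr ⟨h, hlt⟩
      unfold pairCount at hrest
      rcases h with h | h <;>
      · simp only [stairValue, h, h', reduceCtorEq, if_false] at hrest ⊢
        omega
  · simp only [stairValue, resplit_of_not_mem h]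
    split_ifs
    · rfl
    · rw [labelCount_resplit_of_ne (fun e => h (Or.inl e.symm)) (fun e => h (Or.inr e.symm))]

end Resplit

variable {N v : ℕ}

lemma shapeCovers_move {c : ℕ → ℕ} {f i j : ℕ} (hij : i ≠ j) (hj : 0 < c j) (hji : c j ≤ c i + 1) :
    ShapeCovers N v c f (Function.update (Function.update c i (c i + 1)) j (c j - 1)) f := by
  intro g hg
  refine ⟨resplit g i j (c j - 1), ⟨fun x => ?_, ?_⟩, fun p _ => stairValue_le_resplit hij v p⟩
  · have hi := hg.count_some i
    have hj := hg.count_some j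
    simp only [Function.update_apply]
    split_ifs with hxj hxi
    · rw [hxj, labelCount_resplit_j hij, pairCount]; omega
    · rw [hxi, labelCount_resplit_i hij, pairCount]; omega
    · rw [labelCount_resplit_of_ne (by simpa [eq_comm] using hxi) (by simpa [eq_comm] using hxj)]
      exact hg.count_some x
  · rw [labelCount_resplit_of_ne (by simp) (by simp)]
    exact hg.count_none

section Truncate

variable (g : ℕ → Option ℕ) (j r : ℕ)

def truncate (p : ℕ) : Option ℕ :=
  if g p = some j ∧ r ≤ labelCount g (some j) p then none else g p

variable {g j r}

lemma labelCount_truncate_some (p : ℕ) :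
    labelCount (truncate g j r) (some j) p = min (labelCount g (some j) p) r := by
  induction p with
  | zero => simp
  | succ p ih =>
    rw [labelCount_succ, ih, labelCount_succ]
    unfold truncate
    by_cases hj : g p = some j
    · by_cases hr : r ≤ labelCount g (some j) p <;> simp [hj, hr] <;> omega
    · simp [hj]

lemma labelCount_truncate_none (p : ℕ) :
    labelCount (truncate g j r) none p =
      labelCount g none p + (labelCount g (some j) p - r) := by
  induction p with
  | zero => simp
  | succ p ih =>
    rw [labelCount_succ, ih, labelCount_succ, labelCount_succ]
    unfold truncate
    by_cases hj : g p = some j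
    · by_cases hr : r ≤ labelCount g (some j) p <;> simp [hj, hr] <;> omega
    · simp [hj]; omega

lemma labelCount_truncate_of_ne {x : Option ℕ} (hj : some j ≠ x) (hn : none ≠ x) (p : ℕ) :
    labelCount (truncate g j r) x p = labelCount g x p := by
  refine labelCount_congr fun q _ => ?_
  unfold truncate
  split_ifs with h
  · rw [h.1]; exact iff_of_false hn hj
  · rfl

lemma stairValue_le_truncate {v p : ℕ} (hv : g p = some j → labelCount g (some j) p ≤ v) :
    stairValue v g p ≤ stairValue v (truncate g j r) p := by
  by_cases hj : g p = some j
  · by_cases hr : r ≤ labelCount g (some j) p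
    · have ht : truncate g j r p = none := if_pos ⟨hj, hr⟩
      simpa [stairValue, ht, hj] using hv hj
    · have ht : truncate g j r p = some j := by rw [truncate, if_neg (by tauto), hj]
      simp only [stairValue, ht, hj, reduceCtorEq, if_false, labelCount_truncate_some]
      omega
  · have ht : truncate g j r p = g p := if_neg fun h => hj h.1
    simp only [stairValue, ht]
    split_ifs with hn
    · rfl
    · rw [labelCount_truncate_of_ne (Ne.symm hj) (Ne.symm hn)]

end Truncate

lemma shapeCovers_truncate {c : ℕ → ℕ} {f j : ℕ} (hj : 0 < c j) (hjv : c j ≤ v + 1) :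
    ShapeCovers N v c f (Function.update c j (c j - 1)) (f + 1) := by
  intro g hg
  refine ⟨truncate g j (c j - 1), ⟨fun x => ?_, ?_⟩,
    fun p hp => stairValue_le_truncate fun hgp => ?_⟩
  · have := hg.count_some j
    simp only [Function.update_apply]
    split_ifs with hx
    · rw [hx, labelCount_truncate_some]; omega
    · rw [labelCount_truncate_of_ne (by simpa [eq_comm] using hx) (by simp)]
      exact hg.count_some x
  · have := hg.count_some j
    rw [labelCount_truncate_none, hg.count_none]; omega
  · have := labelCount_lt hp hgp
    rw [hg.count_some j] at this
    omega

/-! ### Reaching a shape by moves -/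

lemma eq_of_sum_range_eq {m : ℕ} {c d : ℕ → ℕ} (hdc : ∀ j, d j ≤ c j) (hm : ∀ j, m ≤ j → c j = 0)
    (hsum : ∑ j ∈ Finset.range m, c j = ∑ j ∈ Finset.range m, d j) : c = d := by
  funext j
  rcases lt_or_ge j m with hj | hj
  · exact ((Finset.sum_eq_sum_iff_of_le fun j _ => hdc j).mp hsum.symm j
      (Finset.mem_range.mpr hj)).symm
  · have := hdc j
    rw [hm j hj] at this ⊢
    omega

lemma sum_range_update_pred {m j : ℕ} {c : ℕ → ℕ} (hj : j < m) (hcj : 0 < c j) :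
    ∑ u ∈ Finset.range m, Function.update c j (c j - 1) u + 1 = ∑ u ∈ Finset.range m, c u := by
  rw [Finset.sum_update_of_mem (Finset.mem_range.mpr hj),
    Finset.sum_eq_add_sum_sdiff_singleton_of_mem (Finset.mem_range.mpr hj) c]
  omega

lemma shapeCovers_of_le {m n : ℕ} {c d : ℕ → ℕ} {f : ℕ} (hdc : ∀ j, d j ≤ c j)
    (hcv : ∀ j, c j ≤ v + 1) (hcm : ∀ j, m ≤ j → c j = 0)
    (hsum : ∑ j ∈ Finset.range m, c j = n + ∑ j ∈ Finset.range m, d j) :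
    ShapeCovers N v c f d (f + n) := by
  induction n generalizing c f with
  | zero =>
    rw [eq_of_sum_range_eq hdc hcm (by simpa using hsum), add_zero]
    exact ShapeCovers.refl d f
  | succ n ih =>
    obtain ⟨j, hj, hdcj⟩ := Finset.exists_lt_of_sum_lt (s := Finset.range m) (f := d) (g := c)
      (by omega)
    have hjm : j < m := Finset.mem_range.mp hj
    have hupd := sum_range_update_pred hjm (by omega : 0 < c j)
    rw [show f + (n + 1) = f + 1 + n by omega]
    refine (shapeCovers_truncate (by omega) (hcv j)).trans
      (ih (fun x => ?_) (fun x => ?_) (fun x hx => ?_) (by omega))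
    · rcases eq_or_ne x j with rfl | hx <;> simp [*]
      omega
    · rcases eq_or_ne x j with rfl | hx <;> simp [*]
      have := hcv x; omega
    · rw [Function.update_of_ne (by omega), hcm x hx]

lemma sum_range_transfer {c : ℕ → ℕ} {i j : ℕ} (hij : i < j) (hj : 0 < c j) (t : ℕ) :
    ∑ u ∈ Finset.range t, Function.update (Function.update c i (c i + 1)) j (c j - 1) u =
      ∑ u ∈ Finset.range t, c u + if i < t ∧ t ≤ j then 1 else 0 := by
  induction t with
  | zero => simp
  | succ t ih =>
    rw [Finset.sum_range_succ, ih, Finset.sum_range_succ]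
    simp only [Function.update_apply]
    split_ifs <;> subst_vars <;> omega

lemma exists_first_deficit {m : ℕ} {c d : ℕ → ℕ} (hcm : ∀ j, m ≤ j → c j = 0)
    (hdm : ∀ j, m ≤ j → d j = 0)
    (hle : ∀ t, ∑ u ∈ Finset.range t, c u ≤ ∑ u ∈ Finset.range t, d u) (hne : c ≠ d) :
    ∃ i < m, c i < d i ∧ ∀ u < i, c u = d u := by
  classical
  have hex : ∃ i, c i ≠ d i := by
    by_contra h
    push Not at h
    exact hne (funext h)
  obtain ⟨i, hi, hi_min⟩ : ∃ i, c i ≠ d i ∧ ∀ u < i, c u = d u :=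
    ⟨Nat.find hex, Nat.find_spec hex, fun u hu => not_not.mp (Nat.find_min hex hu)⟩
  have hSi : ∑ u ∈ Finset.range i, c u = ∑ u ∈ Finset.range i, d u :=
    Finset.sum_congr rfl fun u hu => hi_min u (Finset.mem_range.mp hu)
  have := hle (i + 1)
  rw [Finset.sum_range_succ, Finset.sum_range_succ] at this
  refine ⟨i, ?_, by omega, hi_min⟩
  by_contra h
  exact hi (by rw [hcm i (by omega), hdm i (by omega)])

/-- The move from column `j` to column `i` is taken at the first deficit `i` of `c` against `d`,
with `j + 1` the first later place where the prefix sums of `c` catch up with those of `d`;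
this keeps `c` sorted. -/
lemma exists_transfer_of_dominates {m : ℕ} {c d : ℕ → ℕ} (hc : Antitone c) (hd : Antitone d)
    (hcm : ∀ j, m ≤ j → c j = 0) (hdm : ∀ j, m ≤ j → d j = 0)
    (hle : ∀ t, ∑ u ∈ Finset.range t, c u ≤ ∑ u ∈ Finset.range t, d u)
    (heq : ∑ u ∈ Finset.range m, c u = ∑ u ∈ Finset.range m, d u) (hne : c ≠ d) :
    ∃ i j, i < j ∧ j < m ∧ 0 < c j ∧
      Antitone (Function.update (Function.update c i (c i + 1)) j (c j - 1)) ∧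
      ∀ t, i < t → t ≤ j → ∑ u ∈ Finset.range t, c u < ∑ u ∈ Finset.range t, d u := by
  classical
  obtain ⟨i, him, hcdi, hi_min⟩ := exists_first_deficit hcm hdm hle hne
  have hex : ∃ T, i < T ∧ ∑ u ∈ Finset.range T, d u ≤ ∑ u ∈ Finset.range T, c u :=
    ⟨m, him, heq.ge⟩
  obtain ⟨T, ⟨hiT, hT⟩, hTm, hstrict⟩ : ∃ T, (i < T ∧ ∑ u ∈ Finset.range T, d u ≤
      ∑ u ∈ Finset.range T, c u) ∧ T ≤ m ∧ ∀ t, i < t → t < T →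
        ∑ u ∈ Finset.range t, c u < ∑ u ∈ Finset.range t, d u :=
    ⟨Nat.find hex, Nat.find_spec hex, Nat.find_min' hex ⟨him, heq.ge⟩,
      fun t h1 h2 => not_le.mp fun h => Nat.find_min hex h2 ⟨h1, h⟩⟩
  obtain ⟨j, rfl⟩ : ∃ j, T = j + 1 := ⟨T - 1, by omega⟩
  have hSi : ∑ u ∈ Finset.range i, c u = ∑ u ∈ Finset.range i, d u :=
    Finset.sum_congr rfl fun u hu => hi_min u (Finset.mem_range.mp hu)
  have hTle := hle (j + 1)
  have hTle' := hle (j + 2)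
  simp only [Finset.sum_range_succ] at hT hTle hTle'
  have hij : i < j := by
    by_contra h
    obtain rfl : j = i := by omega
    omega
  have hSj := hstrict j hij (by omega)
  have hdj := hd (Nat.le_add_right j 1)
  have hprev : ∀ a < i, c i + 1 ≤ c a := fun a ha => by
    have := hd (show a ≤ i by omega); have := hi_min a ha; omega
  refine ⟨i, j, hij, by omega, by omega, antitone_nat_of_succ_le fun a => ?_,
    fun t h1 h2 => hstrict t h1 (by omega)⟩
  have hca := hc (Nat.le_add_right a 1)
  have hcij := hc hij.le
  have hpa := hprev a
  simp only [Function.update_apply]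
  split_ifs <;> subst_vars <;> omega

lemma shapeCovers_of_dominates {m : ℕ} {c d : ℕ → ℕ} {f : ℕ} (hc : Antitone c) (hd : Antitone d)
    (hcm : ∀ j, m ≤ j → c j = 0) (hdm : ∀ j, m ≤ j → d j = 0)
    (hle : ∀ t, ∑ u ∈ Finset.range t, c u ≤ ∑ u ∈ Finset.range t, d u)
    (heq : ∑ u ∈ Finset.range m, c u = ∑ u ∈ Finset.range m, d u) :
    ShapeCovers N v c f d f := by
  induction hn : ∑ t ∈ Finset.range m,
      (∑ u ∈ Finset.range t, d u - ∑ u ∈ Finset.range t, c u) using Nat.strong_induction_on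
      generalizing c with
  | _ n ih =>
  by_cases hne : c = d
  · rw [hne]; exact ShapeCovers.refl d f
  obtain ⟨i, j, hij, hjm, hj, hanti, hstrict⟩ :=
    exists_transfer_of_dominates hc hd hcm hdm hle heq hne
  have hsum := sum_range_transfer hij hj
  refine (shapeCovers_move hij.ne hj (by have := hc hij.le; omega)).trans
    (ih _ ?_ hanti (fun x hx => ?_) (fun t => ?_)
      (by rw [hsum, if_neg (by omega), heq, add_zero]) rfl)
  · rw [← hn]
    refine Finset.sum_lt_sum (fun t _ => ?_) ⟨j, Finset.mem_range.mpr hjm, ?_⟩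
    · rw [hsum]; omega
    · rw [hsum, if_pos ⟨hij, le_rfl⟩]
      have := hstrict j hij le_rfl
      omega
  · rw [Function.update_of_ne (by omega), Function.update_of_ne (by omega), hcm x hx]
  · rw [hsum]
    split_ifs with ht
    · exact hstrict t ht.1 ht.2
    · exact hle t

/-! ### Conjugate partitions -/

lemma conjList_cons (x : ℕ) (L : List ℕ) (t : ℕ) :
    conjList (x :: L) t = conjList L t + if t ≤ x then 1 else 0 := by
  by_cases h : t ≤ x <;> simp [conjList, h]

lemma conjList_eq_zero {L : List ℕ} {t : ℕ} (h : ∀ x ∈ L, x < t) : conjList L t = 0 := by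
  simpa [conjList, List.filter_eq_nil_iff] using h

lemma conjList_le_length (L : List ℕ) (t : ℕ) : conjList L t ≤ L.length :=
  List.length_filter_le _ _

lemma conjList_antitone (L : List ℕ) : Antitone (conjList L) := by
  intro t t' htt'
  simp only [conjList, ← List.countP_eq_length_filter]
  exact List.countP_mono_left fun x _ hx => by simp at hx ⊢; omega

lemma conjList_succ_le_of_getD_le {L M : List ℕ} (h : ∀ i, L.getD i 0 ≤ M.getD i 0) (t : ℕ) :
    conjList L (t + 1) ≤ conjList M (t + 1) := by
  induction L generalizing M with
  | nil => simp [conjList]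
  | cons x L ih =>
    cases M with
    | nil =>
      have hx : x = 0 := by simpa using h 0
      have := ih (M := []) fun i => by simpa using h (i + 1)
      rw [conjList_cons, if_neg (by omega)]
      simpa using this
    | cons y M =>
      have hxy := h 0
      have := ih fun i => by simpa using h (i + 1)
      simp only [List.getD_cons_zero] at hxy
      rw [conjList_cons, conjList_cons]
      split_ifs <;> omega

lemma sum_range_conjList (L : List ℕ) (t : ℕ) :
    ∑ u ∈ Finset.range t, conjList L (u + 1) = (L.map (min · t)).sum := by
  induction L with
  | nil => simp [conjList]
  | cons x L ih =>
    simp only [conjList_cons, Finset.sum_add_distrib, ih, List.map_cons, List.sum_cons]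
    rw [Finset.sum_ite, Finset.sum_const_zero, Finset.sum_const, smul_eq_mul, mul_one]
    have : (Finset.range t).filter (fun u => u + 1 ≤ x) = Finset.range (min x t) := by
      ext u; simp; omega
    rw [this, Finset.card_range]
    omega

lemma sum_map_min_eq_sum {L : List ℕ} {t : ℕ} (h : ∀ x ∈ L, x ≤ t) :
    (L.map (min · t)).sum = L.sum := by
  rw [List.map_congr_left fun x hx => min_eq_left (h x hx), List.map_id']

lemma sum_map_min_le (M : List ℕ) (t r : ℕ) : (M.map (min · t)).sum ≤ r * t + (M.drop r).sum := by
  induction M generalizing r with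
  | nil => simp
  | cons x M ih =>
    cases r with
    | zero =>
      have := ih 0
      simp only [List.map_cons, List.sum_cons, List.drop_zero, zero_mul, zero_add] at this ⊢
      omega
    | succ r =>
      have := ih r
      simp only [List.map_cons, List.sum_cons, List.drop_succ_cons]
      rw [Nat.succ_mul]
      omega

lemma sum_map_min_eq_of_pairwise {L : List ℕ} (hL : L.Pairwise (· ≥ ·)) (t : ℕ) :
    (L.map (min · t)).sum = conjList L t * t + (L.drop (conjList L t)).sum := by
  induction L with
  | nil => simp [conjList]
  | cons x L ih =>
    obtain ⟨hxL, hL⟩ := List.pairwise_cons.mp hL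
    rw [conjList_cons]
    by_cases hx : t ≤ x
    · simp only [hx, if_true, List.map_cons, List.sum_cons, List.drop_succ_cons, ih hL,
        min_eq_right hx]
      ring
    · have hlt : ∀ y ∈ x :: L, y < t := by
        simpa [not_le.mp hx] using fun y hy => (hxL y hy).trans_lt (not_le.mp hx)
      rw [conjList_eq_zero fun y hy => hlt y (List.mem_cons_of_mem x hy), if_neg hx,
        sum_map_min_eq_sum fun y hy => (hlt y hy).le]
      simp

lemma sum_map_min_le_of_dominates {L M : List ℕ} (hL : L.Pairwise (· ≥ ·))
    (hdom : ∀ i, (L.take i).sum ≤ (M.take i).sum) (hsum : L.sum = M.sum) (t : ℕ) :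
    (M.map (min · t)).sum ≤ (L.map (min · t)).sum := by
  have hM := sum_map_min_le M t (conjList L t)
  have hM' := List.sum_take_add_sum_drop M (conjList L t)
  have hL' := List.sum_take_add_sum_drop L (conjList L t)
  have := hdom (conjList L t)
  rw [sum_map_min_eq_of_pairwise hL]
  omega

lemma le_getD_zero_of_pairwise {L : List ℕ} (hL : L.Pairwise (· ≥ ·)) :
    ∀ x ∈ L, x ≤ L.getD 0 0 := by
  cases L with
  | nil => simp
  | cons y L =>
    intro x hx
    rcases List.mem_cons.mp hx with rfl | hx
    · rfl
    · exact List.rel_of_pairwise_cons hL hx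

lemma sum_range_conjList_of_sum_le {L : List ℕ} {m : ℕ} (h : L.sum ≤ m) :
    ∑ u ∈ Finset.range m, conjList L (u + 1) = L.sum := by
  rw [sum_range_conjList, sum_map_min_eq_sum fun x hx => (List.le_sum_of_mem hx).trans h]

lemma conjList_succ_eq_zero_of_sum_le {L : List ℕ} {j : ℕ} (h : L.sum ≤ j) :
    conjList L (j + 1) = 0 :=
  conjList_eq_zero fun x hx => by have := List.le_sum_of_mem hx; omega

lemma antitone_conjList_succ (L : List ℕ) : Antitone fun j => conjList L (j + 1) :=
  fun _ _ hab => conjList_antitone L (by omega)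

lemma shapeCovers_conjList_of_dominates {f : ℕ} {L M : List ℕ} (hL : L.Pairwise (· ≥ ·))
    (hdom : ∀ i, (L.take i).sum ≤ (M.take i).sum) (hsum : L.sum = M.sum) :
    ShapeCovers N v (fun j => conjList M (j + 1)) f (fun j => conjList L (j + 1)) f :=
  shapeCovers_of_dominates (m := M.sum) (antitone_conjList_succ M) (antitone_conjList_succ L)
    (fun _ hj => conjList_succ_eq_zero_of_sum_le hj)
    (fun _ hj => conjList_succ_eq_zero_of_sum_le (hsum.trans_le hj))
    (fun t => by
      rw [sum_range_conjList, sum_range_conjList]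
      exact sum_map_min_le_of_dominates hL hdom hsum t)
    (by rw [sum_range_conjList_of_sum_le le_rfl, sum_range_conjList_of_sum_le hsum.le, hsum])

lemma shapeCovers_conjList_of_getD_le {f : ℕ} {L M : List ℕ}
    (hsub : ∀ i, L.getD i 0 ≤ M.getD i 0) (hM : M.length ≤ v + 1) :
    ShapeCovers N v (fun j => conjList M (j + 1)) f (fun j => conjList L (j + 1))
      (f + (M.sum - L.sum)) := by
  have hL := sum_range_conjList_of_sum_le (L := L) (m := L.sum + M.sum) (by omega)
  have hM' := sum_range_conjList_of_sum_le (L := M) (m := L.sum + M.sum) (by omega)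
  have hle := Finset.sum_le_sum fun u (_ : u ∈ Finset.range (L.sum + M.sum)) =>
    conjList_succ_le_of_getD_le hsub u
  exact shapeCovers_of_le (m := L.sum + M.sum) (conjList_succ_le_of_getD_le hsub)
    (fun _ => (conjList_le_length M _).trans hM)
    (fun _ hj => conjList_succ_eq_zero_of_sum_le (by omega)) (by omega)

lemma staircaseLists_eq_chainLists (n k s : ℕ) (L : List ℕ) :
    staircaseLists n k s L =
      chainLists (L.getD 0 0) (fun j => conjList L (j + 1)) (n - k) (s - 1) :=
  rfl

lemma mem_Cset_iff {n k s : ℕ} {M : List ℕ} (hM : M.Pairwise (· ≥ ·)) {al : Fin n → ℕ} :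
    al ∈ Cset n k s M ↔ ∃ g, HasShape n g (fun j => conjList M (j + 1)) (n - k) ∧
      ∀ i : Fin n, al i ≤ stairValue (s - 1) g i := by
  have hc : ∀ j, M.getD 0 0 ≤ j → conjList M (j + 1) = 0 := fun j hj =>
    conjList_eq_zero fun x hx => by have := le_getD_zero_of_pairwise hM x hx; omega
  simp only [Cset, staircaseLists_eq_chainLists, Set.mem_ofPred_eq]
  constructor
  · rintro ⟨w, hw, rfl, hle⟩
    obtain ⟨g, hg, hval⟩ := exists_hasShape_of_isShuffle hc hw
    exact ⟨g, hg, fun i => (hle i).trans_eq (hval i i.2)⟩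
  · rintro ⟨g, hg, hle⟩
    refine ⟨(List.range n).map (stairValue (s - 1) g),
      isShuffle_of_hasShape hc (by simpa using hg) fun p hp => ?_, by simp,
      fun i => by simpa using hle i⟩
    simp only [List.length_map, List.length_range] at hp
    simp [hp]

end Staircase

open Staircase

theorem stmt9_general (h k n s : ℕ) (hs : 0 < s) (hhk : h ≤ k) (hkn : k ≤ n)
    (L M : List ℕ) (hL : IsPartitionOf h s L) (hM : IsPartitionOf k s M)
    (hcase : (h = k ∧ ∀ i : ℕ, (L.take i).sum ≤ (M.take i).sum) ∨
      (h < k ∧ ∀ i : ℕ, L.getD i 0 ≤ M.getD i 0)) :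
    Cset n k s M ⊆ Cset n h s L := by
  obtain ⟨hsortL, -, hsumL, -⟩ := hL
  obtain ⟨hsortM, -, hsumM, hlenM⟩ := hM
  have hcover : ShapeCovers n (s - 1) (fun j => conjList M (j + 1)) (n - k)
      (fun j => conjList L (j + 1)) (n - h) := by
    rcases hcase with ⟨rfl, hdom⟩ | ⟨-, hsub⟩
    · exact shapeCovers_conjList_of_dominates hsortL hdom (hsumL.trans hsumM.symm)
    · have := shapeCovers_conjList_of_getD_le (N := n) (v := s - 1) (f := n - k) hsub (by omega)
      rwa [hsumL, hsumM, show n - k + (k - h) = n - h by omega] at this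
  intro al hal
  obtain ⟨g, hg, hle⟩ := (mem_Cset_iff hsortM).mp hal
  obtain ⟨g', hg', hle'⟩ := hcover g hg
  exact (mem_Cset_iff hsortL).mpr ⟨g', hg', fun i => (hle i).trans (hle' i i.2)⟩

/-- If `λ ⊢ h` and `μ ⊢ k` with `h ≤ k ≤ n`, and either `h = k` with
`λ ≤_dom μ` or `h < k` with `λ ⊆ μ`, then `C_{n,μ,s} ⊆ C_{n,λ,s}`. -/
theorem stmt9 (h k n s : ℕ) (hh : 0 < h) (hs : 0 < s) (hhk : h ≤ k) (hkn : k ≤ n)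
    (L M : List ℕ) (hL : IsPartitionOf h s L) (hM : IsPartitionOf k s M)
    (hcase : (h = k ∧ ∀ i : ℕ, (L.take i).sum ≤ (M.take i).sum) ∨
      (h < k ∧ ∀ i : ℕ, L.getD i 0 ≤ M.getD i 0)) :
    Cset n k s M ⊆ Cset n h s L :=
  stmt9_general h k n s hs hhk hkn L M hL hM hcase
end

section
/- Let d and m be positive integers, let i ≥ 0 be an integer, and let S ⊆ {x_1,…,x_{n−1}} with |S| = m. Then x_n^i · e_d(S) ∈ x_n^{i+1}·ℚ[x_1,…,x_n] + I_{n,λ,s} in each of the following cases: (a) d > m + 1 − p^n_{m+1}(λ); (b) d = m + 1 − p^n_{m+1}(λ) and d + i > m − p^n_m(λ); (c) i < ℓ(λ) and d > m − p^{n−1}_m(λ^{(i)}); (d) ℓ(λ) ≤ i ≤ s−1, k < n, and d > m − p^{n−1}_m(λ). -/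
open MvPolynomial

/-- `λ^{(i)}`: subtract one from the `(i+1)`-st part (`i` 0-indexed), re-sort into
weakly decreasing order, and drop any zero part. -/
def reduce (L : List ℕ) (i : ℕ) : List ℕ :=
  (List.insertionSort (· ≥ ·) (L.set i (L.getD i 0 - 1))).filter fun x => 0 < x

def reduceStep (L : List ℕ) (i : ℕ) : List ℕ := if i < L.length then reduce L i else L

def reduceSeq : List ℕ → List ℕ → List ℕ
  | L, [] => L
  | L, i :: rest => reduceSeq (reduceStep L i) rest

/-- `λ^{(I)}` where `I = (i_1 < ⋯ < i_j)` enumerates the finite set `T`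
(the recursion processes `i_j` first, i.e. the entries in decreasing order). -/
def lamI (L : List ℕ) (T : Finset ℕ) : List ℕ := reduceSeq L ((T.sort (· ≤ ·)).reverse)

/-!
Write `a = x_n ∉ S`. Everything comes from `e_{d+1}(S ∪ {a}) = e_{d+1}(S) + a·e_d(S)`. When
`e_d(S ∪ {a})` is a generator of `I`, it gives `a^i e_d(S) ≡ -a^{i+1} e_{d-1}(S)` modulo `I`
(case (a)). When `e_{d+1}(S ∪ {a})` is a generator, it trades `a^{i+1} e_d(S)` for
`-a^i e_{d+1}(S)`; after `i` trades one reaches `e_{d+i}(S)`, itself a generator (case (b)).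

Cases (c) and (d) reduce to these through `p^n_{m+1}(λ) = p^{n-1}_m(λ) + λ'_n` and
`p^{n-1}_m(λ) = p^{n-1}_m(λ^{(i)}) + [n - m ≤ λ_{i+1} ≤ n - 1]`: if a correction term is
nonzero we are in case (a); otherwise `λ_{i+1} < n - m`, so, `λ` being sorted,
`λ'_{n-m} ≤ i` and case (b) applies. In case (d), `λ'_n = 0` and `λ'_{n-m} ≤ ℓ(λ) ≤ i`.
-/

lemma conjList_eq_countP (L : List ℕ) (j : ℕ) : conjList L j = L.countP (j ≤ ·) :=
  List.countP_eq_length_filter.symm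

lemma conjList_eq_zero_of_sum_lt {L : List ℕ} {j : ℕ} (h : L.sum < j) : conjList L j = 0 := by
  rw [conjList_eq_countP, List.countP_eq_zero]
  intro x hx
  have := List.le_sum_of_mem hx
  simp only [decide_eq_true_eq]
  omega

lemma conjList_le_of_getElem_lt {L : List ℕ} (hL : L.Pairwise (· ≥ ·)) {i t : ℕ}
    (hi : i < L.length) (ht : L[i] < t) : conjList L t ≤ i := by
  have hdrop : (L.drop i).countP (t ≤ ·) = 0 := by
    rw [List.countP_eq_zero]
    intro x hx
    have hsd := hL.drop (i := i)
    rw [List.drop_eq_getElem_cons hi, List.pairwise_cons] at hsd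
    rw [List.drop_eq_getElem_cons hi, List.mem_cons] at hx
    rcases hx with rfl | hx
    · simpa using ht
    · simpa using (hsd.1 x hx).trans_lt ht
  rw [conjList_eq_countP, ← List.take_append_drop i L, List.countP_append, hdrop, add_zero]
  exact List.countP_le_length.trans (List.length_take_le i L)

lemma conjList_reduce_add {L : List ℕ} (hpos : ∀ x ∈ L, 0 < x) {i j : ℕ} (hi : i < L.length)
    (hj : 1 ≤ j) : conjList (reduce L i) j + (if j = L[i] then 1 else 0) = conjList L j := by
  have hLi : 0 < L[i] := hpos _ (List.getElem_mem hi)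
  have hset : conjList (reduce L i) j = (L.set i (L[i] - 1)).countP fun x => decide (j ≤ x) := by
    rw [conjList_eq_countP, reduce, List.getD_eq_getElem _ _ hi, List.countP_filter]
    refine (List.countP_congr fun x _ => ?_).trans ((List.perm_insertionSort _ _).countP_eq _)
    simp only [Bool.and_eq_true, decide_eq_true_eq]
    omega
  have hle := List.boole_getElem_le_countP (p := (j ≤ ·)) hi
  rw [hset, List.countP_set hi, conjList_eq_countP]
  simp only [decide_eq_true_eq] at hle ⊢
  split_ifs at hle ⊢ <;> omega

lemma pcal_succ (L : List ℕ) {N m : ℕ} (h : m < N) :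
    pcal L N (m + 1) = conjList L (N - m) + pcal L N m := by
  rw [pcal, pcal, ← Finset.insert_Icc_add_one_left_eq_Icc (by omega : N - (m + 1) + 1 ≤ N),
    Finset.sum_insert (by simp)]
  congr 3 <;> omega

lemma pcal_pred_add_conjList (L : List ℕ) {N m : ℕ} (h : m < N) :
    pcal L (N - 1) m + conjList L N = pcal L N (m + 1) := by
  obtain ⟨N, rfl⟩ : ∃ N', N = N' + 1 := ⟨N - 1, by omega⟩
  rw [pcal, pcal, Nat.add_sub_cancel, Finset.sum_Icc_succ_top (by omega)]
  congr 3
  omega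

lemma pcal_reduce_add {L : List ℕ} (hpos : ∀ x ∈ L, 0 < x) {i : ℕ} (hi : i < L.length)
    (N m : ℕ) :
    pcal (reduce L i) N m + (if L[i] ∈ Finset.Icc (N - m + 1) N then 1 else 0) = pcal L N m := by
  rw [pcal, pcal, ← Finset.sum_ite_eq' _ _ fun _ => 1, ← Finset.sum_add_distrib]
  exact Finset.sum_congr rfl fun j hj =>
    conjList_reduce_add hpos hi (by have := (Finset.mem_Icc.1 hj).1; omega)

lemma sub_pcal_lt_or_of_sub_pcal_reduce_lt {L : List ℕ} (hL : L.Pairwise (· ≥ ·))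
    (hpos : ∀ x ∈ L, 0 < x) {i n m d : ℕ} (hi : i < L.length) (hmn : m < n)
    (h : m - pcal (reduce L i) (n - 1) m < d) :
    m + 1 - pcal L n (m + 1) < d ∨ (m - pcal L n (m + 1) < d ∧ conjList L (n - m) ≤ i) := by
  have hred := pcal_reduce_add hpos hi (n - 1) m
  have hpred := pcal_pred_add_conjList L hmn
  simp only [Finset.mem_Icc] at hred
  by_cases hgap : (n - 1 - m + 1 ≤ L[i] ∧ L[i] ≤ n - 1) ∨ 0 < conjList L n
  · left
    split_ifs at hred <;> omega
  · push Not at hgap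
    obtain ⟨hnot, hcn⟩ := hgap
    have hin : ¬ n ≤ L[i] := by
      rw [Nat.le_zero, conjList_eq_countP, List.countP_eq_zero] at hcn
      simpa using hcn _ (List.getElem_mem hi)
    exact Or.inr ⟨by split_ifs at hred <;> omega, conjList_le_of_getElem_lt hL hi (by omega)⟩

section EsymF

variable {n : ℕ}

lemma esymF_insert {S : Finset (Fin n)} {a : Fin n} (ha : a ∉ S) (d : ℕ) :
    esymF (insert a S) (d + 1) = esymF S (d + 1) + X a * esymF S d := by
  unfold esymF
  rw [Finset.powersetCard_succ_insert ha, Finset.sum_union, Finset.sum_image, Finset.mul_sum]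
  · refine congrArg _ (Finset.sum_congr rfl fun T hT => ?_)
    exact Finset.prod_insert fun haT => ha ((Finset.mem_powersetCard.1 hT).1 haT)
  · intro T hT U hU hTU
    have haT : a ∉ T := fun h => ha ((Finset.mem_powersetCard.1 hT).1 h)
    have haU : a ∉ U := fun h => ha ((Finset.mem_powersetCard.1 hU).1 h)
    rw [← Finset.erase_insert haT, ← Finset.erase_insert haU, hTU]
  · refine Finset.disjoint_left.2 fun T hT hT' => ?_
    obtain ⟨U, -, rfl⟩ := Finset.mem_image.1 hT'
    exact ha ((Finset.mem_powersetCard.1 hT).1 (Finset.mem_insert_self a U))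

variable {s : ℕ} {L : List ℕ}

lemma esymF_mem_idealI {S : Finset (Fin n)} {d : ℕ} (h : S.card - pcal L n S.card < d) :
    esymF S d ∈ IdealI n s L :=
  Ideal.subset_span (Or.inr ⟨S, d, h, rfl⟩)

variable {S : Finset (Fin n)} {a : Fin n}

lemma pow_mul_esymF_mem_idealI (ha : a ∉ S) {i d : ℕ}
    (h₁ : S.card + 1 - pcal L n (S.card + 1) ≤ d) (h₂ : S.card - pcal L n S.card < d + i) :
    X a ^ i * esymF S d ∈ IdealI n s L := by
  induction i generalizing d with
  | zero => simpa using esymF_mem_idealI h₂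
  | succ i ih =>
    have hsplit : X a ^ (i + 1) * esymF S d
        = X a ^ i * esymF (insert a S) (d + 1) - X a ^ i * esymF S (d + 1) := by
      rw [esymF_insert ha]; ring
    rw [hsplit]
    refine Ideal.sub_mem _ (Ideal.mul_mem_left _ _ (esymF_mem_idealI ?_)) (ih (by omega) (by omega))
    rw [Finset.card_insert_of_notMem ha]
    omega

lemma pow_mul_esymF_mem_span_sup_idealI (ha : a ∉ S) {i d : ℕ}
    (h : S.card + 1 - pcal L n (S.card + 1) < d) :
    X a ^ i * esymF S d ∈ Ideal.span {X a ^ (i + 1)} ⊔ IdealI n s L := by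
  obtain ⟨d, rfl⟩ : ∃ e, d = e + 1 := ⟨d - 1, by omega⟩
  have hsplit : X a ^ i * esymF S (d + 1)
      = X a ^ i * esymF (insert a S) (d + 1) - esymF S d * X a ^ (i + 1) := by
    rw [esymF_insert ha]; ring
  rw [hsplit]
  refine Ideal.sub_mem _ (Ideal.mem_sup_right (Ideal.mul_mem_left _ _ (esymF_mem_idealI ?_)))
    (Ideal.mem_sup_left (Ideal.mul_mem_left _ _ (Ideal.mem_span_singleton_self _)))
  rwa [Finset.card_insert_of_notMem ha]

lemma pow_mul_esymF_mem_idealI_of_conjList_le (ha : a ∉ S) {i d : ℕ} (h : S.card - pcal L n (S.card + 1) < d)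
    (hc : conjList L (n - S.card) ≤ i) : X a ^ i * esymF S d ∈ IdealI n s L := by
  have := pcal_succ L (by simpa using Finset.card_lt_univ_of_notMem ha : S.card < n)
  exact pow_mul_esymF_mem_idealI ha (by omega) (by omega)

end EsymF

/-- The technical lemma: in each of the four cases (a)–(d),
`x_n^i · e_d(S) ∈ x_n^{i+1}·ℚ[x] + I_{n,λ,s}` for `S ⊆ {x_1,…,x_{n-1}}`, `|S| = m`. -/
theorem stmt11 (n k s : ℕ) (hn : 2 ≤ n)
    (L : List ℕ) (hL : IsPartitionOf k s L)
    (d m : ℕ) (i : ℕ)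
    (S : Finset (Fin n)) (hS : ∀ x ∈ S, (x : ℕ) < n - 1) (hScard : S.card = m)
    (hcase :
      (m + 1 - pcal L n (m + 1) < d) ∨
      (d = m + 1 - pcal L n (m + 1) ∧ m - pcal L n m < d + i) ∨
      (i < L.length ∧ m - pcal (reduce L i) (n - 1) m < d) ∨
      (L.length ≤ i ∧ i ≤ s - 1 ∧ k < n ∧ m - pcal L (n - 1) m < d)) :
    (X (⟨n - 1, by omega⟩ : Fin n)) ^ i * esymF S d ∈
      Ideal.span {(X (⟨n - 1, by omega⟩ : Fin n) : MvPolynomial (Fin n) ℚ) ^ (i + 1)} ⊔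
        IdealI n s L := by
  obtain ⟨hsort, hpos, hsum, -⟩ := hL
  subst hScard
  have ha : (⟨n - 1, by omega⟩ : Fin n) ∉ S := fun h => (hS _ h).false
  have hSn : S.card < n := by simpa using Finset.card_lt_univ_of_notMem ha
  rcases hcase with h | ⟨rfl, h⟩ | ⟨hi, h⟩ | ⟨hi, -, hkn, h⟩
  · exact pow_mul_esymF_mem_span_sup_idealI ha h
  · exact Ideal.mem_sup_right (pow_mul_esymF_mem_idealI ha le_rfl h)
  · rcases sub_pcal_lt_or_of_sub_pcal_reduce_lt hsort hpos hi hSn h with h | ⟨h, hc⟩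
    · exact pow_mul_esymF_mem_span_sup_idealI ha h
    · exact Ideal.mem_sup_right (pow_mul_esymF_mem_idealI_of_conjList_le ha h hc)
  · have hcn : conjList L n = 0 := conjList_eq_zero_of_sum_lt (hsum ▸ hkn)
    have hc : conjList L (n - S.card) ≤ i := (List.length_filter_le _ _).trans hi
    refine Ideal.mem_sup_right (pow_mul_esymF_mem_idealI_of_conjList_le ha ?_ hc)
    rwa [← pcal_pred_add_conjList L hSn, hcn, add_zero]
end
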